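/- For the normal deformation Z_t = Z + t ε i Z' of an arclength-parametrized curve, the first-order variation of the curvature is δk = (k² + d²/ds²)ε, i.e. k_t = k + t(k²ε + ε'') + O(t²) where k_t is the curvature of Z_t with respect to its own arclength. -/

import Mathlib

open Complex Asymptotics Filter
open scoped ContDiff

theorem taylor1 {f : ℝ → ℝ} (hf : ContDiffAt ℝ 2 f 0) :
    (fun t => f t - (f 0 + t * deriv f 0)) =O[nhds (0:ℝ)] fun t => t ^ 2 := by
  have hdiff : ∀ᶠ t in nhds (0:ℝ), DifferentiableAt ℝ f t := by
    filter_upwards [hf.eventually (by norm_num)] with t ht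
    exact ht.differentiableAt (by norm_num)
  have hd2 : DifferentiableAt ℝ (deriv f) 0 := by
    have h1 : ContDiffAt ℝ 1 (fderiv ℝ f) 0 := hf.fderiv_right le_rfl
    have h2 : DifferentiableAt ℝ (fderiv ℝ f) 0 := h1.differentiableAt (by norm_num)
    have : deriv f = fun x => fderiv ℝ f x 1 := by
      ext x; rfl
    rw [this]
    exact (ContinuousLinearMap.apply ℝ ℝ (1:ℝ)).differentiableAt.comp 0 h2
  obtain ⟨C, hC⟩ := (hd2.isBigO_sub).bound
  simp only [sub_zero] at hC
  rw [Metric.eventually_nhds_iff] at hC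
  obtain ⟨δ₁, hδ₁, hB⟩ := hC
  rw [Metric.eventually_nhds_iff] at hdiff
  obtain ⟨δ₂, hδ₂, hD⟩ := hdiff
  rw [isBigO_iff]
  refine ⟨|C|, ?_⟩
  rw [Metric.eventually_nhds_iff]
  refine ⟨min δ₁ δ₂, lt_min hδ₁ hδ₂, fun t ht => ?_⟩
  simp only [dist_zero_right, Real.norm_eq_abs] at ht hB hD ⊢
  set g : ℝ → ℝ := fun x => f x - x * deriv f 0 with hg
  have key : ‖g t - g 0‖ ≤ (|C| * |t|) * ‖t - 0‖ := by
    apply Convex.norm_image_sub_le_of_norm_hasDerivWithin_le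
      (f' := fun x => deriv f x - deriv f 0) (s := Set.Icc (-|t|) |t|)
    · intro x hx
      have hxt : |x| ≤ |t| := abs_le.2 ⟨hx.1, hx.2⟩
      have hxd : DifferentiableAt ℝ f x :=
        hD (lt_of_le_of_lt hxt (lt_of_lt_of_le ht (min_le_right _ _)))
      have : HasDerivAt (fun x => f x - x * deriv f 0) (deriv f x - deriv f 0) x := by
        have h := hxd.hasDerivAt.sub ((hasDerivAt_id' x).mul_const (deriv f 0))
        rw [one_mul] at h
        exact h
      exact this.hasDerivWithinAt
    · intro x hx
      have hxt : |x| ≤ |t| := abs_le.2 ⟨hx.1, hx.2⟩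
      have := hB (lt_of_le_of_lt hxt (lt_of_lt_of_le ht (min_le_left _ _)))
      simp only [Real.norm_eq_abs] at this ⊢
      calc |deriv f x - deriv f 0| ≤ C * |x| := this
        _ ≤ |C| * |x| := mul_le_mul_of_nonneg_right (le_abs_self C) (abs_nonneg x)
        _ ≤ |C| * |t| := mul_le_mul_of_nonneg_left hxt (abs_nonneg C)
    · exact convex_Icc _ _
    · exact ⟨neg_nonpos.2 (abs_nonneg t), abs_nonneg t⟩
    · exact ⟨neg_abs_le t, le_abs_self t⟩
  simp only [hg, sub_zero, Real.norm_eq_abs] at key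
  calc |f t - (f 0 + t * deriv f 0)| = |(f t - t * deriv f 0) - (f 0 - 0 * deriv f 0)| := by ring_nf
    _ ≤ |C| * |t| * |t| := key
    _ = |C| * |t^2| := by rw [_root_.abs_pow]; ring


/-- First-order variation of the curvature under a normal deformation
`Z_t = Z + tε i Z'`: the curvature of `Z_t` with respect to its own arclength
satisfies `k_t = k + t(k²ε + ε'') + O(t²)`. -/
theorem normal_variation_curvature (Z : ℝ → ℂ) (k ε : ℝ → ℝ)
    (hZ : ContDiff ℝ (⊤ : ℕ∞) Z)
    (harc : ∀ s : ℝ, ‖deriv Z s‖ = 1)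
    (hkcont : Continuous k)
    (hcurv : ∀ s : ℝ, deriv (deriv Z) s = Complex.I * (k s : ℂ) * deriv Z s)
    (hε : ContDiff ℝ (⊤ : ℕ∞) ε)
    (Zt : ℝ → ℝ → ℂ)
    (hZt : ∀ t s, Zt t s = Z s + (t * ε s : ℝ) * Complex.I * deriv Z s)
    (kt : ℝ → ℝ → ℝ)
    (hkt : ∀ t s, kt t s
      = (((starRingEnd ℂ) (deriv (Zt t) s)) * deriv (deriv (Zt t)) s).im
          / ‖deriv (Zt t) s‖^3) :
    ∀ s : ℝ,
      (fun t : ℝ =>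
        kt t s - (k s + t * ((k s)^2 * ε s + deriv (deriv ε) s)))
        =O[nhds (0 : ℝ)] (fun t : ℝ => t^2) := by
  -- differentiability bookkeeping
  have hZi : ContDiff ℝ ∞ Z := hZ.of_le (by simp)
  have hZ1 : Differentiable ℝ Z := (contDiff_infty_iff_deriv.mp hZi).1
  have hZd : ContDiff ℝ ∞ (deriv Z) := (contDiff_infty_iff_deriv.mp hZi).2
  have hZ2 : Differentiable ℝ (deriv Z) := (contDiff_infty_iff_deriv.mp hZd).1
  have hZdd : ContDiff ℝ ∞ (deriv (deriv Z)) := (contDiff_infty_iff_deriv.mp hZd).2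
  have hZ3 : Differentiable ℝ (deriv (deriv Z)) := (contDiff_infty_iff_deriv.mp hZdd).1
  have hεi : ContDiff ℝ ∞ ε := hε.of_le (by simp)
  have hε1 : Differentiable ℝ ε := (contDiff_infty_iff_deriv.mp hεi).1
  have hεd : ContDiff ℝ ∞ (deriv ε) := (contDiff_infty_iff_deriv.mp hεi).2
  have hε2 : Differentiable ℝ (deriv ε) := (contDiff_infty_iff_deriv.mp hεd).1
  -- unit tangent
  have hone : ∀ x : ℝ, (starRingEnd ℂ) (deriv Z x) * deriv Z x = 1 := by
    intro x
    rw [mul_comm, Complex.mul_conj, Complex.normSq_eq_norm_sq, harc x]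
    norm_num
  -- first derivative of the deformed curve
  have hD1 : ∀ (t x : ℝ), HasDerivAt (Zt t)
      (deriv Z x + ((t:ℂ)*(deriv ε x)*Complex.I*deriv Z x + (t:ℂ)*(ε x)*Complex.I*deriv (deriv Z) x)) x := by
    intro t x
    have hfun : Zt t = fun y => Z y + (t:ℂ)*(ε y:ℂ)*Complex.I*deriv Z y := by
      funext y; rw [hZt t y]; push_cast; ring
    rw [hfun]
    have h1 : HasDerivAt (fun y : ℝ => (t:ℂ)*(ε y:ℂ)*Complex.I) ((t:ℂ)*(deriv ε x)*Complex.I) x :=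
      (((hε1 x).hasDerivAt.ofReal_comp).const_mul (t:ℂ)).mul_const Complex.I
    exact (hZ1 x).hasDerivAt.add (h1.mul (hZ2 x).hasDerivAt)
  have hd1 : ∀ (t : ℝ), deriv (Zt t)
      = fun x => deriv Z x + ((t:ℂ)*(deriv ε x)*Complex.I*deriv Z x + (t:ℂ)*(ε x)*Complex.I*deriv (deriv Z) x) :=
    fun t => funext fun x => (hD1 t x).deriv
  -- second derivative of the deformed curve at s
  intro s
  have hD2 : ∀ t : ℝ, HasDerivAt (deriv (Zt t))
      (deriv (deriv Z) s + ((t:ℂ)*(deriv (deriv ε) s)*Complex.I*deriv Z s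
        + 2*(t:ℂ)*(deriv ε s)*Complex.I*deriv (deriv Z) s
        + (t:ℂ)*(ε s)*Complex.I*deriv (deriv (deriv Z)) s)) s := by
    intro t
    rw [hd1 t]
    have h1 : HasDerivAt (fun y : ℝ => (t:ℂ)*((deriv ε y : ℝ):ℂ)*Complex.I) ((t:ℂ)*(deriv (deriv ε) s)*Complex.I) s :=
      (((hε2 s).hasDerivAt.ofReal_comp).const_mul (t:ℂ)).mul_const Complex.I
    have h2 : HasDerivAt (fun y : ℝ => (t:ℂ)*(ε y:ℂ)*Complex.I) ((t:ℂ)*(deriv ε s)*Complex.I) s :=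
      (((hε1 s).hasDerivAt.ofReal_comp).const_mul (t:ℂ)).mul_const Complex.I
    have h3 := (hZ2 s).hasDerivAt.add ((h1.mul (hZ2 s).hasDerivAt).add (h2.mul (hZ3 s).hasDerivAt))
    exact h3.congr_deriv (by ring)
  -- the conjugate-tangent times third derivative has real part -k^2
  have hκ : ∀ x : ℝ, (starRingEnd ℂ) (deriv Z x) * deriv (deriv Z) x = Complex.I * (k x : ℂ) := by
    intro x
    rw [hcurv x]
    linear_combination (Complex.I * (k x : ℂ)) * hone x
  have hconj : ∀ x : ℝ, HasDerivAt (fun y : ℝ => (starRingEnd ℂ) (deriv Z y))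
      ((starRingEnd ℂ) (deriv (deriv Z) x)) x := by
    intro x
    have h := (Complex.conjCLE.toContinuousLinearMap.hasFDerivAt (x := deriv Z x)).comp_hasDerivAt
      x (hZ2 x).hasDerivAt
    simpa [Function.comp_def, Complex.conjCAE_apply] using h
  have hκd : HasDerivAt (fun x : ℝ => (starRingEnd ℂ) (deriv Z x) * deriv (deriv Z) x)
      ((starRingEnd ℂ) (deriv (deriv Z) s) * deriv (deriv Z) s
        + (starRingEnd ℂ) (deriv Z s) * deriv (deriv (deriv Z)) s) s :=
    (hconj s).mul (hZ3 s).hasDerivAt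
  have hre2 : HasDerivAt (fun x : ℝ => ((starRingEnd ℂ) (deriv Z x) * deriv (deriv Z) x).re)
      (((starRingEnd ℂ) (deriv (deriv Z) s) * deriv (deriv Z) s
        + (starRingEnd ℂ) (deriv Z s) * deriv (deriv (deriv Z)) s).re) s :=
    (Complex.reCLM.hasFDerivAt).comp_hasDerivAt s hκd
  have hzero : ((starRingEnd ℂ) (deriv (deriv Z) s) * deriv (deriv Z) s
        + (starRingEnd ℂ) (deriv Z s) * deriv (deriv (deriv Z)) s).re = 0 := by
    have hfun0 : (fun x : ℝ => ((starRingEnd ℂ) (deriv Z x) * deriv (deriv Z) x).re)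
        = fun _ => (0:ℝ) := by
      funext x; rw [hκ x]; simp
    rw [hfun0] at hre2
    exact hre2.unique (hasDerivAt_const s 0)
  have hnsq : ((starRingEnd ℂ) (deriv (deriv Z) s) * deriv (deriv Z) s).re = (k s)^2 := by
    rw [mul_comm, Complex.mul_conj, hcurv s]
    simp only [map_mul, Complex.normSq_I, Complex.normSq_ofReal, one_mul]
    have : Complex.normSq (deriv Z s) = 1 := by
      rw [Complex.normSq_eq_norm_sq, harc s]; norm_num
    rw [this]
    simp [sq]
  have hqre : ((starRingEnd ℂ) (deriv Z s) * deriv (deriv (deriv Z)) s).re = -(k s)^2 := by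
    have := hzero
    rw [Complex.add_re, hnsq] at this
    linarith
  -- abbreviations
  have hU2 := hcurv s
  have hUnorm := harc s
  have honeU := hone s
  have hval1 : ∀ t : ℝ, deriv (Zt t) s
      = deriv Z s + ((t:ℂ)*(deriv ε s)*Complex.I*deriv Z s + (t:ℂ)*(ε s)*Complex.I*deriv (deriv Z) s) :=
    fun t => (hD1 t s).deriv
  have hval2 : ∀ t : ℝ, deriv (deriv (Zt t)) s
      = deriv (deriv Z) s + ((t:ℂ)*(deriv (deriv ε) s)*Complex.I*deriv Z s
        + 2*(t:ℂ)*(deriv ε s)*Complex.I*deriv (deriv Z) s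
        + (t:ℂ)*(ε s)*Complex.I*deriv (deriv (deriv Z)) s) :=
    fun t => (hD2 t).deriv
  set A := ε s with hA_def
  set E1 := deriv ε s with hE1_def
  set E2 := deriv (deriv ε) s with hE2_def
  set K := k s with hK_def
  set U := deriv Z s with hU_def
  set U2 := deriv (deriv Z) s with hU2_def
  set U3 := deriv (deriv (deriv Z)) s with hU3_def
  set q : ℂ := (starRingEnd ℂ) U * U3 with hq_def
  have hcU : U * (starRingEnd ℂ) U = 1 := by rw [mul_comm]; exact honeU
  have hU3q : U3 = U * q := by
    rw [hq_def]
    linear_combination (-U3) * hcU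
  -- factor the first derivative
  have hFt : ∀ t : ℝ, U + ((t:ℂ)*(E1:ℝ)*Complex.I*U + (t:ℂ)*(A:ℝ)*Complex.I*U2)
      = U * (1 + (t:ℂ)*(Complex.I*(E1:ℝ) - (A:ℝ)*(K:ℝ))) := by
    intro t; rw [hU2]; linear_combination (U * (t:ℂ) * (A:ℝ) * (K:ℝ)) * Complex.I_sq
  have hGt : ∀ t : ℝ, U2 + ((t:ℂ)*(E2:ℝ)*Complex.I*U + 2*(t:ℂ)*(E1:ℝ)*Complex.I*U2 + (t:ℂ)*(A:ℝ)*Complex.I*U3)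
      = U * (Complex.I*(K:ℝ) + (t:ℂ)*(Complex.I*(E2:ℝ) - 2*(E1:ℝ)*(K:ℝ)
          + (A:ℝ)*Complex.I*q)) := by
    intro t
    rw [hU2, hU3q]
    linear_combination (2 * (t:ℂ) * (E1:ℝ) * (K:ℝ) * U) * Complex.I_sq
  -- numerator
  set R : ℝ := ((starRingEnd ℂ) (Complex.I*(E1:ℝ) - (A:ℝ)*(K:ℝ))
      * (Complex.I*(E2:ℝ) - 2*(E1:ℝ)*(K:ℝ) + (A:ℝ)*Complex.I*q)).im with hR_def
  have hnum : ∀ t : ℝ,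
      ((starRingEnd ℂ) (U * (1 + (t:ℂ)*(Complex.I*(E1:ℝ) - (A:ℝ)*(K:ℝ))))
        * (U * (Complex.I*(K:ℝ) + (t:ℂ)*(Complex.I*(E2:ℝ) - 2*(E1:ℝ)*(K:ℝ) + (A:ℝ)*Complex.I*q)))).im
      = K + t*(E2 - 2*A*K^2) + t^2 * R := by
    intro t
    have hh : (starRingEnd ℂ) (U * (1 + (t:ℂ)*(Complex.I*(E1:ℝ) - (A:ℝ)*(K:ℝ))))
        * (U * (Complex.I*(K:ℝ) + (t:ℂ)*(Complex.I*(E2:ℝ) - 2*(E1:ℝ)*(K:ℝ) + (A:ℝ)*Complex.I*q)))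
        = (1 + (t:ℂ)*((-Complex.I)*(E1:ℝ) - (A:ℝ)*(K:ℝ)))
          * (Complex.I*(K:ℝ) + (t:ℂ)*(Complex.I*(E2:ℝ) - 2*(E1:ℝ)*(K:ℝ) + (A:ℝ)*Complex.I*q)) := by
      simp only [map_add, map_mul, map_sub, map_one, Complex.conj_I, Complex.conj_ofReal]
      linear_combination ((1 + (t:ℂ)*((-Complex.I)*(E1:ℝ) - (A:ℝ)*(K:ℝ)))
        * (Complex.I*(K:ℝ) + (t:ℂ)*(Complex.I*(E2:ℝ) - 2*(E1:ℝ)*(K:ℝ) + (A:ℝ)*Complex.I*q))) * honeU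
    rw [hh, hR_def]
    have hq0 : q.re = -K^2 := hqre
    simp only [map_sub, map_add, map_mul, map_one, map_ofNat, Complex.conj_I, Complex.conj_ofReal,
      Complex.add_im, Complex.add_re, Complex.mul_im, Complex.mul_re, Complex.sub_im, Complex.sub_re,
      Complex.I_re, Complex.I_im, Complex.ofReal_re, Complex.ofReal_im, Complex.one_re, Complex.one_im,
      Complex.neg_re, Complex.neg_im, Complex.re_ofNat, Complex.im_ofNat]
    rw [hq0]
    ring
  -- norm of the first derivative
  have hnorm : ∀ t : ℝ, ‖U * (1 + (t:ℂ)*(Complex.I*(E1:ℝ) - (A:ℝ)*(K:ℝ)))‖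
      = Real.sqrt ((1 - t*A*K)^2 + (t*E1)^2) := by
    intro t
    rw [norm_mul, hUnorm, one_mul, Complex.norm_def]
    congr 1
    simp only [Complex.normSq_apply, Complex.add_re, Complex.add_im, Complex.mul_re, Complex.mul_im,
      Complex.sub_re, Complex.sub_im, Complex.I_re, Complex.I_im, Complex.ofReal_re, Complex.ofReal_im,
      Complex.one_re, Complex.one_im]
    ring
  -- the curvature as an explicit function of t
  set Q : ℝ → ℝ := fun t => (1 - t*A*K)^2 + (t*E1)^2 with hQ_def
  set g : ℝ → ℝ := fun t => (K + t*(E2 - 2*A*K^2) + t^2 * R) / (Real.sqrt (Q t))^3 with hg_def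
  have hfs : ∀ t : ℝ, kt t s = g t := by
    intro t
    rw [hkt t s, hval1 t, hval2 t, hFt t, hGt t, hnum t, hnorm t, hg_def]
  -- analytic facts about g
  have hQ0 : Q 0 = 1 := by rw [hQ_def]; norm_num
  have hQcd : ContDiff ℝ 2 Q := by
    rw [hQ_def]
    exact ((contDiff_const.sub ((contDiff_id.mul contDiff_const).mul contDiff_const)).pow 2).add
      ((contDiff_id.mul contDiff_const).pow 2)
  have hNcd : ContDiff ℝ 2 (fun t : ℝ => K + t*(E2 - 2*A*K^2) + t^2*R) :=
    (contDiff_const.add (contDiff_id.mul contDiff_const)).add ((contDiff_id.pow 2).mul contDiff_const)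
  have hQ0ne : Q 0 ≠ 0 := by rw [hQ0]; norm_num
  have hDcd : ContDiffAt ℝ 2 (fun t : ℝ => Real.sqrt (Q t) ^ 3) 0 :=
    ((Real.contDiffAt_sqrt hQ0ne).comp 0 hQcd.contDiffAt).pow 3
  have hDne : Real.sqrt (Q 0) ^ 3 ≠ 0 := by rw [hQ0]; simp
  have hgcd : ContDiffAt ℝ 2 g 0 := by
    rw [hg_def]
    exact hNcd.contDiffAt.div hDcd hDne
  -- derivative of g at 0
  have ha : HasDerivAt (fun t : ℝ => 1 - t*A*K) (-(A*K)) 0 := by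
    simpa using (((hasDerivAt_id (0:ℝ)).mul_const A).mul_const K).const_sub 1
  have hb : HasDerivAt (fun t : ℝ => (t*E1)^2) 0 0 := by
    simpa using ((hasDerivAt_id' (0:ℝ)).mul_const E1).fun_pow 2
  have hQd : HasDerivAt Q (-(2*A*K)) 0 := by
    rw [hQ_def]
    have h := (ha.fun_pow 2).add hb
    exact h.congr_deriv (by push_cast; ring)
  have hsq : HasDerivAt (fun t : ℝ => Real.sqrt (Q t)) (-(A*K)) 0 := by
    have h := (Real.hasDerivAt_sqrt hQ0ne).comp 0 hQd
    rw [hQ0] at h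
    simp only [Real.sqrt_one] at h
    exact h.congr_deriv (by ring)
  have hden : HasDerivAt (fun t : ℝ => Real.sqrt (Q t) ^ 3) (-(3*A*K)) 0 := by
    have h := hsq.fun_pow 3
    exact h.congr_deriv (by rw [hQ0, Real.sqrt_one]; ring)
  have hN : HasDerivAt (fun t : ℝ => K + t*(E2 - 2*A*K^2) + t^2*R) (E2 - 2*A*K^2) 0 := by
    have h1 : HasDerivAt (fun t : ℝ => K + t*(E2 - 2*A*K^2)) (E2 - 2*A*K^2) 0 := by
      simpa using ((hasDerivAt_id (0:ℝ)).mul_const (E2 - 2*A*K^2)).const_add K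
    have h2 : HasDerivAt (fun t : ℝ => t^2*R) 0 0 := by
      simpa using (hasDerivAt_pow 2 (0:ℝ)).mul_const R
    exact (h1.add h2).congr_deriv (by ring)
  have hg' : HasDerivAt g (E2 + A*K^2) 0 := by
    rw [hg_def]
    have h := hN.div hden hDne
    exact h.congr_deriv (by rw [hQ0, Real.sqrt_one]; norm_num; ring)
  have hg0 : g 0 = K := by
    rw [hg_def]
    show (K + 0*(E2 - 2*A*K^2) + 0^2*R) / (Real.sqrt (Q 0))^3 = K
    rw [hQ0, Real.sqrt_one]
    norm_num
  have hgd : deriv g 0 = E2 + A*K^2 := hg'.deriv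
  have heq : (fun t : ℝ => kt t s - (K + t*(K^2 * A + E2)))
      = fun t : ℝ => g t - (g 0 + t * deriv g 0) := by
    funext t
    rw [hfs t, hg0, hgd]
    ring
  rw [heq]
  exact taylor1 hgcd
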